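/- arXiv:2605.30153 — 2 statements merged into one kernel-verified Lean document; each statement's English description precedes it below -/
import Mathlib

section
/- Let V ⊆ R^d be a k-dimensional linear subspace with orthonormal basis matrix A ∈ R^{d×k} (AᵀA = I_k), and let μ be a probability measure supported on V with μ = (A)_# ν for a probability measure ν on R^k. Then for t > 0, the score of μ ∗ N(0, t I_d) satisfies s_t(x) = −(x − A Aᵀ x)/t + A s_t^low(Aᵀ x), where s_t^low is the score of ν ∗ N(0, t I_k). -/
/-!
Write `P = I - A Aᵀ` for the projection onto `V^⊥`. Since `AᵀA = I`, Pythagoras gives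
`‖z - A y‖² = ‖P z‖² + ‖Aᵀ z - y‖²`, so the `d`-dimensional Gaussian kernel factors as a Gaussian
in the normal direction `P z` times the `k`-dimensional kernel evaluated at `Aᵀ z - y`. Integrating
against `ν`, the smoothed density of `A_# ν` is `c · exp(-‖P z‖²/(2t)) · p_t^low(Aᵀ z)`, and its
log-gradient is `-P z / t + A ∇ log p_t^low (Aᵀ z)`. The low-dimensional density is positive and
differentiable because the kernel and its gradient are bounded uniformly in `y`.
-/

open MeasureTheory Real

/-- Density of `N(0, t I_m)` on `ℝ^m`. -/
noncomputable def gpdf (m : ℕ) (t : ℝ) (x : EuclideanSpace ℝ (Fin m)) : ℝ :=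
  (2 * π * t) ^ (-(m : ℝ) / 2) * Real.exp (-‖x‖ ^ 2 / (2 * t))

open InnerProductSpace ContinuousLinearMap
open scoped RealInnerProductSpace

section Gradient

variable {E : Type*} [NormedAddCommGroup E] [InnerProductSpace ℝ E] [CompleteSpace E]
  {f g : E → ℝ} {f' g' x : E}

theorem HasGradientAt.add (hf : HasGradientAt f f' x) (hg : HasGradientAt g g' x) :
    HasGradientAt (fun z => f z + g z) (f' + g') x := by
  rw [hasGradientAt_iff_hasFDerivAt, map_add]
  exact hf.hasFDerivAt.add hg.hasFDerivAt

theorem HasGradientAt.const_add (c : ℝ) (hf : HasGradientAt f f' x) :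
    HasGradientAt (fun z => c + f z) f' x :=
  hf.hasFDerivAt.const_add c

theorem HasGradientAt.const_mul (c : ℝ) (hf : HasGradientAt f f' x) :
    HasGradientAt (fun z => c * f z) (c • f') x := by
  rw [hasGradientAt_iff_hasFDerivAt, map_smul]
  exact hf.hasFDerivAt.const_mul c

variable {F : Type*} [NormedAddCommGroup F] [InnerProductSpace ℝ F] [CompleteSpace F]

theorem HasGradientAt.comp_adjoint {A : E →L[ℝ] F} {y : F} (hf : HasGradientAt f f' (adjoint A y)) :
    HasGradientAt (fun z => f (adjoint A z)) (A f') y := by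
  rw [hasGradientAt_iff_hasFDerivAt]
  refine (hf.hasFDerivAt.comp y (adjoint A).hasFDerivAt).congr_fderiv ?_
  ext h
  simp [adjoint_inner_right]

end Gradient

section Gaussian

variable {m : ℕ} {t : ℝ}

theorem gpdf_pos (ht : 0 < t) (v : EuclideanSpace ℝ (Fin m)) : 0 < gpdf m t v := by
  unfold gpdf; positivity

theorem gpdf_le (ht : 0 ≤ t) (v : EuclideanSpace ℝ (Fin m)) :
    gpdf m t v ≤ (2 * π * t) ^ (-(m : ℝ) / 2) := by
  refine mul_le_of_le_one_right (by positivity) (exp_le_one_iff.2 ?_)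
  exact div_nonpos_of_nonpos_of_nonneg (neg_nonpos.2 (by positivity)) (by positivity)

theorem continuous_gpdf : Continuous (gpdf m t) := by
  unfold gpdf; fun_prop

theorem hasGradientAt_gpdf (v : EuclideanSpace ℝ (Fin m)) :
    HasGradientAt (gpdf m t) ((-t⁻¹ * gpdf m t v) • v) v := by
  rw [hasGradientAt_iff_hasFDerivAt]
  have hexp : HasDerivAt (fun r : ℝ => (2 * π * t) ^ (-(m : ℝ) / 2) * exp (-r / (2 * t)))
      ((2 * π * t) ^ (-(m : ℝ) / 2) * (exp (-‖v‖ ^ 2 / (2 * t)) * (-1 / (2 * t)))) (‖v‖ ^ 2) :=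
    (((hasDerivAt_id _).neg.div_const (2 * t)).exp).const_mul _
  refine (hexp.comp_hasFDerivAt v (hasStrictFDerivAt_norm_sq v).hasFDerivAt).congr_fderiv ?_
  ext h
  simp only [smul_apply, coe_innerSL_apply, nsmul_eq_mul, Nat.cast_ofNat, smul_eq_mul, gpdf,
    neg_mul, neg_smul, map_neg, map_smul, neg_apply, toDual_apply_apply]
  ring

theorem norm_mul_gpdf_le (ht : 0 < t) (v : EuclideanSpace ℝ (Fin m)) :
    ‖v‖ * gpdf m t v ≤ (1 + 2 * t) * (2 * π * t) ^ (-(m : ℝ) / 2) := by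
  set s := ‖v‖ ^ 2 / (2 * t)
  have hs : 0 ≤ s := by positivity
  -- `1 + s ≤ exp s` turns the Gaussian tail into a rational bound
  have key : ‖v‖ * exp (-s) * (1 + s) ≤ (1 + 2 * t) * (1 + s) := calc
    ‖v‖ * exp (-s) * (1 + s) ≤ ‖v‖ * exp (-s) * exp s := by
      gcongr; linarith [add_one_le_exp s]
    _ = ‖v‖ := by rw [mul_assoc, ← exp_add, neg_add_cancel, exp_zero, mul_one]
    _ ≤ 1 + 2 * t * s := by
      have : 2 * t * s = ‖v‖ ^ 2 := by simp only [s]; field_simp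
      nlinarith [sq_nonneg (‖v‖ - 1)]
    _ ≤ (1 + 2 * t) * (1 + s) := by nlinarith
  have hexp : ‖v‖ * exp (-s) ≤ 1 + 2 * t := le_of_mul_le_mul_right key (by positivity)
  have hpos : 0 < (2 * π * t) ^ (-(m : ℝ) / 2) := by positivity
  calc ‖v‖ * gpdf m t v = (‖v‖ * exp (-s)) * (2 * π * t) ^ (-(m : ℝ) / 2) := by
        simp only [gpdf, s, neg_div]; ring
    _ ≤ _ := by gcongr

end Gaussian

section Smoothing

variable {m : ℕ} {t : ℝ} (ν : Measure (EuclideanSpace ℝ (Fin m))) [IsFiniteMeasure ν]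

theorem integrable_gpdf_sub (ht : 0 < t) (w : EuclideanSpace ℝ (Fin m)) :
    Integrable (fun y => gpdf m t (w - y)) ν := by
  refine (integrable_const ((2 * π * t) ^ (-(m : ℝ) / 2))).mono'
    (continuous_gpdf.comp (continuous_const.sub continuous_id)).aestronglyMeasurable ?_
  filter_upwards with y
  rw [norm_of_nonneg ((gpdf_pos ht _).le)]
  exact gpdf_le ht.le _

theorem integral_gpdf_sub_pos [NeZero ν] (ht : 0 < t) (w : EuclideanSpace ℝ (Fin m)) :
    0 < ∫ y, gpdf m t (w - y) ∂ν :=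
  (integral_pos_iff_support_of_nonneg (fun y => (gpdf_pos ht _).le)
    (integrable_gpdf_sub ν ht w)).2 <| by simp [Function.support, (gpdf_pos ht _).ne', NeZero.ne]

theorem differentiable_integral_gpdf_sub (ht : 0 < t) :
    Differentiable ℝ (fun w => ∫ y, gpdf m t (w - y) ∂ν) := by
  intro w₀
  have hcont : Continuous fun p : EuclideanSpace ℝ (Fin m) × EuclideanSpace ℝ (Fin m) =>
      toDual ℝ _ ((-t⁻¹ * gpdf m t (p.1 - p.2)) • (p.1 - p.2)) := by
    have := continuous_gpdf (m := m) (t := t)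
    fun_prop
  refine (hasFDerivAt_integral_of_dominated_of_fderiv_le
    (F' := fun w y => toDual ℝ _ ((-t⁻¹ * gpdf m t (w - y)) • (w - y)))
    (bound := fun _ => t⁻¹ * ((1 + 2 * t) * (2 * π * t) ^ (-(m : ℝ) / 2)))
    Filter.univ_mem ?_ (integrable_gpdf_sub ν ht w₀) ?_ ?_ (integrable_const _) ?_).differentiableAt
  · exact Filter.Eventually.of_forall fun w => (integrable_gpdf_sub ν ht w).aestronglyMeasurable
  · exact (hcont.comp (Continuous.prodMk_right w₀)).aestronglyMeasurable
  · refine Filter.Eventually.of_forall fun y w _ => ?_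
    rw [LinearIsometryEquiv.norm_map, norm_smul, norm_mul, norm_neg, norm_inv, norm_of_nonneg ht.le,
      norm_of_nonneg (gpdf_pos ht _).le, mul_assoc, mul_comm (gpdf m t _)]
    exact mul_le_mul_of_nonneg_left (norm_mul_gpdf_le ht _) (by positivity)
  · refine Filter.Eventually.of_forall fun y w _ => ?_
    simpa [Function.comp_def] using
      (hasGradientAt_gpdf (t := t) (w - y)).hasFDerivAt.comp w (hasFDerivAt_sub_const y)

end Smoothing

section IsometricEmbedding

variable {E F : Type*} [NormedAddCommGroup E] [InnerProductSpace ℝ E] [CompleteSpace E]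
  [NormedAddCommGroup F] [InnerProductSpace ℝ F] [CompleteSpace F]
  {A : E →L[ℝ] F}

theorem inner_sub_apply_adjoint_apply_eq_zero (hA : ∀ u, adjoint A (A u) = u) (z : F) (u : E) :
    ⟪z - A (adjoint A z), A u⟫ = 0 := by
  rw [← adjoint_inner_left, map_sub, hA, sub_self, inner_zero_left]

theorem norm_map_of_adjoint_apply_apply (hA : ∀ u, adjoint A (A u) = u) (u : E) : ‖A u‖ = ‖u‖ := by
  rw [norm_eq_sqrt_re_inner (𝕜 := ℝ), norm_eq_sqrt_re_inner (𝕜 := ℝ), ← adjoint_inner_right, hA]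

theorem norm_sub_apply_sq (hA : ∀ u, adjoint A (A u) = u) (z : F) (u : E) :
    ‖z - A u‖ ^ 2 = ‖z - A (adjoint A z)‖ ^ 2 + ‖adjoint A z - u‖ ^ 2 := by
  have hsplit : z - A u = (z - A (adjoint A z)) + A (adjoint A z - u) := by
    rw [map_sub]; abel
  rw [hsplit, norm_add_sq_real, inner_sub_apply_adjoint_apply_eq_zero hA,
    norm_map_of_adjoint_apply_apply hA]
  ring

theorem hasGradientAt_norm_sub_apply_adjoint_sq (hA : ∀ u, adjoint A (A u) = u) (x : F) :
    HasGradientAt (fun z => ‖z - A (adjoint A z)‖ ^ 2) ((2 : ℝ) • (x - A (adjoint A x))) x := by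
  rw [hasGradientAt_iff_hasFDerivAt]
  refine ((ContinuousLinearMap.id ℝ F - A ∘L adjoint A).hasFDerivAt.norm_sq).congr_fderiv ?_
  ext h
  simp only [sub_apply, id_apply, comp_apply, map_sub, smul_apply, coe_innerSL_apply, nsmul_eq_mul,
    Nat.cast_ofNat, map_smul, toDual_apply_apply, smul_eq_mul, mul_eq_mul_left_iff, sub_eq_self,
    OfNat.ofNat_ne_zero, or_false]
  rw [← inner_sub_left, inner_sub_apply_adjoint_apply_eq_zero hA]

end IsometricEmbedding

theorem gpdf_sub_apply {d k : ℕ} {t : ℝ} (ht : 0 < t)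
    {A : EuclideanSpace ℝ (Fin k) →L[ℝ] EuclideanSpace ℝ (Fin d)} (hA : ∀ u, adjoint A (A u) = u)
    (z : EuclideanSpace ℝ (Fin d)) (y : EuclideanSpace ℝ (Fin k)) :
    gpdf d t (z - A y) = (2 * π * t) ^ (((k : ℝ) - d) / 2)
      * exp (-‖z - A (adjoint A z)‖ ^ 2 / (2 * t)) * gpdf k t (adjoint A z - y) := by
  have hexp : -(d : ℝ) / 2 = ((k : ℝ) - d) / 2 + -(k : ℝ) / 2 := by ring
  rw [gpdf, gpdf, norm_sub_apply_sq hA, hexp, rpow_add (by positivity), neg_add, add_div,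
    exp_add]
  ring

/-- Normal-tangent decomposition of the smoothed score of a subspace-supported
distribution `μ = A_# ν`:
`s_t(x) = −(x − AAᵀx)/t + A s_t^low(Aᵀ x)`. -/
theorem stmt3 {d k : ℕ} (A : EuclideanSpace ℝ (Fin k) →L[ℝ] EuclideanSpace ℝ (Fin d))
    (hA : ∀ z, ContinuousLinearMap.adjoint A (A z) = z)
    (ν : Measure (EuclideanSpace ℝ (Fin k))) [IsProbabilityMeasure ν]
    (t : ℝ) (ht : 0 < t) (x : EuclideanSpace ℝ (Fin d)) :
    gradient (fun z => Real.log (∫ y, gpdf d t (z - A y) ∂ν)) x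
      = (-t⁻¹) • (x - A (ContinuousLinearMap.adjoint A x))
        + A (gradient (fun w => Real.log (∫ y, gpdf k t (w - y) ∂ν))
            (ContinuousLinearMap.adjoint A x)) := by
  set L := fun w => Real.log (∫ y, gpdf k t (w - y) ∂ν)
  have hsplit : (fun z => Real.log (∫ y, gpdf d t (z - A y) ∂ν)) = fun z =>
      ((((k : ℝ) - d) / 2) * Real.log (2 * π * t)
        + (-(2 * t)⁻¹) * ‖z - A (adjoint A z)‖ ^ 2) + L (adjoint A z) := by
    funext z
    simp_rw [gpdf_sub_apply ht hA z, integral_const_mul]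
    rw [log_mul (by positivity) (integral_gpdf_sub_pos ν ht _).ne', log_mul (by positivity)
      (by positivity), log_exp, log_rpow (by positivity)]
    ring
  have hL : HasGradientAt L (gradient L (adjoint A x)) (adjoint A x) :=
    (((differentiable_integral_gpdf_sub ν ht).differentiableAt).log
      (integral_gpdf_sub_pos ν ht _).ne').hasGradientAt
  rw [hsplit, ((((hasGradientAt_norm_sub_apply_adjoint_sq hA x).const_mul _).const_add _).add
    hL.comp_adjoint).gradient, smul_smul]
  congr 2
  field_simp
end

section
/- Let p_t be the density of ν ∗ N(0, t I_k) for a probability measure ν on R^k, and let s_t = ∇ log p_t be its score. Then for all x ∈ R^k, ‖s_t(x)‖² ≤ (2/t) log(1 / ((2πt)^{k/2} p_t(x))). -/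
open MeasureTheory Real

/-! Write `q(x) = (2πt)^{k/2} p_t(x) = ∫ exp(-‖x - y‖² / 2t) dν(y)`. Differentiating under the
integral, `t ∇q(x) = ∫ (y - x) exp(-‖x - y‖² / 2t) dν(y)`, so by Cauchy–Schwarz
`(t ‖∇q(x)‖)² ≤ q(x) ∫ ‖x - y‖² exp(-‖x - y‖² / 2t) dν(y)`. The last integrand is `2t φ(G)` for
`G = exp(-‖x - y‖² / 2t)` and the concave `φ(s) = -s log s`, so by Jensen the integral is at most
`2t φ(q(x)) = 2t q(x) log(1 / q(x))`. Dividing by `(t q(x))²` bounds `‖∇ log q(x)‖²`. -/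

open scoped RealInnerProductSpace

theorem sq_integral_mul_le_integral_sq_mul_integral_sq {α : Type*} [MeasurableSpace α]
    {μ : Measure α} {f g : α → ℝ} (hf : MemLp f 2 μ) (hg : MemLp g 2 μ) :
    (∫ a, f a * g a ∂μ) ^ 2 ≤ (∫ a, f a ^ 2 ∂μ) * ∫ a, g a ^ 2 ∂μ := by
  have inner_toLp {u v : α → ℝ} (hu : MemLp u 2 μ) (hv : MemLp v 2 μ) :
      ⟪hu.toLp u, hv.toLp v⟫ = ∫ a, u a * v a ∂μ := by
    rw [L2.inner_def]
    refine integral_congr_ae ?_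
    filter_upwards [hu.coeFn_toLp, hv.coeFn_toLp] with a hua hva
    rw [hua, hva, real_inner_eq_re_inner, RCLike.inner_apply, conj_trivial, mul_comm]
    rfl
  have h := real_inner_mul_inner_self_le (hf.toLp f) (hg.toLp g)
  rw [inner_toLp hf hg, inner_toLp hf hf, inner_toLp hg hg] at h
  simpa only [sq] using h

section GaussKernel

variable {E : Type*} [NormedAddCommGroup E] {t : ℝ}

noncomputable def gaussKernel (t : ℝ) (z : E) : ℝ := exp (-‖z‖ ^ 2 / (2 * t))

lemma gaussKernel_pos (t : ℝ) (z : E) : 0 < gaussKernel t z := exp_pos _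

lemma gaussKernel_le_one (ht : 0 ≤ t) (z : E) : gaussKernel t z ≤ 1 :=
  exp_le_one_iff.2 (div_nonpos_of_nonpos_of_nonneg (by simp only [neg_nonpos]; positivity)
    (by positivity))

@[fun_prop]
lemma continuous_gaussKernel (t : ℝ) : Continuous (gaussKernel t : E → ℝ) := by
  unfold gaussKernel; fun_prop

lemma gaussKernel_two_mul_sq (t : ℝ) (z : E) : gaussKernel (2 * t) z ^ 2 = gaussKernel t z := by
  rw [gaussKernel, gaussKernel, ← exp_nat_mul]; congr 1; push_cast; ring

lemma sq_norm_mul_gaussKernel (ht : t ≠ 0) (z : E) :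
    ‖z‖ ^ 2 * gaussKernel t z = 2 * t * negMulLog (gaussKernel t z) := by
  rw [negMulLog, gaussKernel, log_exp]; field_simp

lemma norm_mul_gaussKernel_le_sqrt (ht : 0 < t) (z : E) : ‖z‖ * gaussKernel t z ≤ √t := by
  have hr : 0 < √t := sqrt_pos.2 ht
  have h : ‖z‖ ≤ √t * exp (‖z‖ ^ 2 / (2 * t)) :=
    calc ‖z‖ ≤ √t * (‖z‖ ^ 2 / (2 * t) + 1) := by
          have key :
              √t * (‖z‖ ^ 2 / (2 * t) + 1) = (‖z‖ - √t) ^ 2 / (2 * √t) + ‖z‖ + √t / 2 := by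
            field_simp; linear_combination ‖z‖ ^ 2 * sq_sqrt ht.le
          rw [key]; linarith [div_nonneg (sq_nonneg (‖z‖ - √t)) (by positivity : (0:ℝ) ≤ 2 * √t)]
      _ ≤ _ := by gcongr; exact add_one_le_exp _
  calc ‖z‖ * gaussKernel t z ≤ √t * exp (‖z‖ ^ 2 / (2 * t)) * gaussKernel t z :=
        mul_le_mul_of_nonneg_right h (gaussKernel_pos t z).le
    _ = √t := by
        rw [gaussKernel, mul_assoc, ← exp_add, neg_div, add_neg_cancel, exp_zero, mul_one]

lemma hasGradientAt_gaussKernel_sub [InnerProductSpace ℝ E] [CompleteSpace E]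
    (t : ℝ) (y x : E) :
    HasGradientAt (fun z => gaussKernel t (z - y)) (t⁻¹ • gaussKernel t (x - y) • (y - x)) x := by
  have hfun : (fun z => gaussKernel t (z - y)) = fun z => exp (-(2 * t)⁻¹ * ‖z - y‖ ^ 2) := by
    funext z; rw [gaussKernel]; ring_nf
  rw [hasGradientAt_iff_hasFDerivAt, hfun]
  refine (((hasFDerivAt_id x).sub_const y).norm_sq.const_mul (-(2 * t)⁻¹)).exp.congr_fderiv ?_
  ext v
  simp only [mul_inv_rev, id_eq, neg_mul, map_sub, ContinuousLinearMap.comp_id, neg_smul,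
    smul_neg, neg_apply, smul_apply, sub_apply, coe_innerSL_apply, nsmul_eq_mul, Nat.cast_ofNat,
    smul_eq_mul, gaussKernel, map_smul, InnerProductSpace.toDual_apply_apply]
  ring_nf

end GaussKernel

section GaussianSmoothing

variable {E : Type*} [NormedAddCommGroup E] [MeasurableSpace E] {ν : Measure E} {t : ℝ}

/-- `(2πt)^{k/2} p_t`: the density of `ν ∗ N(0, t I)` without its normalising constant. -/
noncomputable def gaussianSmoothing (ν : Measure E) (t : ℝ) (x : E) : ℝ :=
  ∫ y, gaussKernel t (x - y) ∂ν

lemma norm_integral_gaussKernel_smul_le [NormedSpace ℝ E] (t : ℝ) (x : E) :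
    ‖∫ y, gaussKernel t (x - y) • (y - x) ∂ν‖ ≤ ∫ y, ‖x - y‖ * gaussKernel t (x - y) ∂ν := by
  refine (norm_integral_le_integral_norm _).trans_eq (integral_congr_ae ?_)
  refine Filter.Eventually.of_forall fun y => ?_
  simp only [norm_smul, norm_of_nonneg (gaussKernel_pos t _).le, norm_sub_rev y x, mul_comm]

variable [OpensMeasurableSpace E]

lemma memLp_gaussKernel_sub [IsFiniteMeasure ν] (ht : 0 ≤ t) (x : E) :
    MemLp (fun y => gaussKernel t (x - y)) 2 ν :=
  MemLp.of_bound ((continuous_gaussKernel t).comp (continuous_sub_left x)).aestronglyMeasurable 1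
    (Filter.Eventually.of_forall fun y => by
      rw [norm_of_nonneg (gaussKernel_pos t _).le]; exact gaussKernel_le_one ht _)

lemma integrable_gaussKernel_sub [IsFiniteMeasure ν] (ht : 0 ≤ t) (x : E) :
    Integrable (fun y => gaussKernel t (x - y)) ν :=
  (memLp_gaussKernel_sub ht x).integrable one_le_two

lemma gaussianSmoothing_pos [IsFiniteMeasure ν] [NeZero ν] (ht : 0 ≤ t) (x : E) :
    0 < gaussianSmoothing ν t x :=
  integral_exp_pos (integrable_gaussKernel_sub ht x)

lemma hasGradientAt_gaussianSmoothing [InnerProductSpace ℝ E] [CompleteSpace E]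
    [SecondCountableTopology E] [IsFiniteMeasure ν] (ht : 0 < t) (x : E) :
    HasGradientAt (gaussianSmoothing ν t) (t⁻¹ • ∫ y, gaussKernel t (x - y) • (y - x) ∂ν) x := by
  let v : E → E → E := fun z y => t⁻¹ • gaussKernel t (z - y) • (y - z)
  have hv_le : ∀ z y, ‖v z y‖ ≤ t⁻¹ * √t := fun z y => by
    rw [norm_smul, norm_smul, norm_of_nonneg (inv_nonneg.2 ht.le),
      norm_of_nonneg (gaussKernel_pos t _).le, norm_sub_rev, mul_comm (gaussKernel t _)]
    exact mul_le_mul_of_nonneg_left (norm_mul_gaussKernel_le_sqrt ht _) (inv_nonneg.2 ht.le)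
  have hv_cont : Continuous (v x) := by fun_prop
  have hint : ∫ y, InnerProductSpace.toDual ℝ E (v x y) ∂ν =
      InnerProductSpace.toDual ℝ E (t⁻¹ • ∫ y, gaussKernel t (x - y) • (y - x) ∂ν) := by
    refine ((InnerProductSpace.toDual ℝ E).toLinearIsometry.integral_comp_comm (v x)).trans ?_
    rw [integral_smul]; rfl
  rw [hasGradientAt_iff_hasFDerivAt, ← hint]
  show HasFDerivAt (fun z => ∫ y, gaussKernel t (z - y) ∂ν) _ x
  refine hasFDerivAt_integral_of_dominated_of_fderiv_le
    (F' := fun z y => InnerProductSpace.toDual ℝ E (v z y)) (bound := fun _ => t⁻¹ * √t)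
    Filter.univ_mem ?_ ?_ ?_ ?_ ?_ ?_
  · exact Filter.Eventually.of_forall fun z =>
      ((continuous_gaussKernel t).comp (continuous_sub_left z)).aestronglyMeasurable
  · exact integrable_gaussKernel_sub ht.le x
  · exact ((InnerProductSpace.toDual ℝ E).continuous.comp hv_cont).aestronglyMeasurable
  · exact Filter.Eventually.of_forall fun y z _ => by
      rw [LinearIsometryEquiv.norm_map]; exact hv_le z y
  · exact integrable_const _
  · exact Filter.Eventually.of_forall fun y z _ => hasGradientAt_gaussKernel_sub t y z

lemma gradient_log_gaussianSmoothing [InnerProductSpace ℝ E] [CompleteSpace E]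
    [SecondCountableTopology E] [IsFiniteMeasure ν] [NeZero ν] (ht : 0 < t) (x : E) :
    gradient (fun z => log (gaussianSmoothing ν t z)) x =
      (gaussianSmoothing ν t x)⁻¹ • t⁻¹ • ∫ y, gaussKernel t (x - y) • (y - x) ∂ν := by
  have h := (hasGradientAt_iff_hasFDerivAt.1 (hasGradientAt_gaussianSmoothing (ν := ν) ht x)).log
    (gaussianSmoothing_pos ht.le x).ne'
  rw [← map_smul] at h
  exact (hasGradientAt_iff_hasFDerivAt.2 h).gradient

lemma memLp_norm_sub_mul_gaussKernel [IsFiniteMeasure ν] (ht : 0 < t) (x : E) :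
    MemLp (fun y => ‖x - y‖ * gaussKernel t (x - y)) 2 ν := by
  refine MemLp.of_bound ?_ √t (Filter.Eventually.of_forall fun y => ?_)
  · exact (by fun_prop : Continuous fun y => ‖x - y‖ * gaussKernel t (x - y)).aestronglyMeasurable
  · rw [norm_of_nonneg (mul_nonneg (norm_nonneg _) (gaussKernel_pos t _).le)]
    exact norm_mul_gaussKernel_le_sqrt ht _

lemma sq_integral_norm_sub_mul_gaussKernel_le [IsFiniteMeasure ν] (ht : 0 < t) (x : E) :
    (∫ y, ‖x - y‖ * gaussKernel t (x - y) ∂ν) ^ 2 ≤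
      (∫ y, ‖x - y‖ ^ 2 * gaussKernel t (x - y) ∂ν) * gaussianSmoothing ν t x := by
  have h := sq_integral_mul_le_integral_sq_mul_integral_sq
    (memLp_norm_sub_mul_gaussKernel (ν := ν) (by positivity : 0 < 2 * t) x)
    (memLp_gaussKernel_sub (ν := ν) (by positivity : 0 ≤ 2 * t) x)
  rw [gaussianSmoothing]
  simpa only [mul_assoc, mul_pow, ← sq, gaussKernel_two_mul_sq] using h

lemma integral_sq_norm_sub_mul_gaussKernel_le [IsProbabilityMeasure ν] (ht : 0 < t) (x : E) :
    ∫ y, ‖x - y‖ ^ 2 * gaussKernel t (x - y) ∂ν ≤ 2 * t * negMulLog (gaussianSmoothing ν t x) := by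
  have hG_nonneg (y : E) : 0 ≤ gaussKernel t (x - y) := (gaussKernel_pos t _).le
  have h_int : Integrable (fun y => negMulLog (gaussKernel t (x - y))) ν := by
    refine (integrable_const 1).mono' ?_ (Filter.Eventually.of_forall fun y => ?_)
    · exact (continuous_negMulLog.comp ((continuous_gaussKernel t).comp
        (continuous_sub_left x))).aestronglyMeasurable
    · rw [norm_of_nonneg (negMulLog_nonneg (hG_nonneg y) (gaussKernel_le_one ht.le _))]
      linarith [negMulLog_le_one_sub_self (hG_nonneg y), hG_nonneg y]
  simp_rw [sq_norm_mul_gaussKernel ht.ne']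
  rw [integral_const_mul]
  exact mul_le_mul_of_nonneg_left (concaveOn_negMulLog.le_map_integral
    continuous_negMulLog.continuousOn isClosed_Ici (Filter.Eventually.of_forall hG_nonneg)
    (integrable_gaussKernel_sub ht.le x) h_int) (by positivity)

theorem sq_norm_gradient_log_gaussianSmoothing_le [InnerProductSpace ℝ E] [CompleteSpace E]
    [SecondCountableTopology E] [IsProbabilityMeasure ν] (ht : 0 < t) (x : E) :
    ‖gradient (fun z => log (gaussianSmoothing ν t z)) x‖ ^ 2 ≤
      2 / t * log (1 / gaussianSmoothing ν t x) := by
  set q := gaussianSmoothing ν t x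
  have hq : 0 < q := gaussianSmoothing_pos ht.le x
  set I := ∫ y, ‖x - y‖ * gaussKernel t (x - y) ∂ν
  have h_score : ‖gradient (fun z => log (gaussianSmoothing ν t z)) x‖ ≤ q⁻¹ * t⁻¹ * I := by
    rw [gradient_log_gaussianSmoothing ht, norm_smul, norm_smul,
      norm_of_nonneg (inv_nonneg.2 hq.le), norm_of_nonneg (inv_nonneg.2 ht.le), ← mul_assoc]
    exact mul_le_mul_of_nonneg_left (norm_integral_gaussKernel_smul_le t x) (by positivity)
  have hI : I ^ 2 ≤ 2 * t * negMulLog q * q :=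
    (sq_integral_norm_sub_mul_gaussKernel_le ht x).trans
      (mul_le_mul_of_nonneg_right (integral_sq_norm_sub_mul_gaussKernel_le ht x) hq.le)
  calc ‖gradient (fun z => log (gaussianSmoothing ν t z)) x‖ ^ 2 ≤ (q⁻¹ * t⁻¹ * I) ^ 2 :=
        pow_le_pow_left₀ (norm_nonneg _) h_score 2
    _ = (q⁻¹ * t⁻¹) ^ 2 * I ^ 2 := by ring
    _ ≤ (q⁻¹ * t⁻¹) ^ 2 * (2 * t * negMulLog q * q) := by gcongr
    _ = 2 / t * log (1 / q) := by
        rw [negMulLog, one_div, log_inv]; field_simp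

end GaussianSmoothing

/-- Pointwise score bound in terms of the density level:
`‖s_t(x)‖² ≤ (2/t) log(1 / ((2πt)^{k/2} p_t(x)))`. -/
theorem stmt12 {k : ℕ} (ν : Measure (EuclideanSpace ℝ (Fin k))) [IsProbabilityMeasure ν]
    (t : ℝ) (ht : 0 < t) (pt : EuclideanSpace ℝ (Fin k) → ℝ)
    (hpt : ∀ x, pt x = ∫ y, gpdf k t (x - y) ∂ν)
    (x : EuclideanSpace ℝ (Fin k)) :
    ‖gradient (fun z => Real.log (pt z)) x‖ ^ 2
      ≤ (2 / t) * Real.log (1 / ((2 * π * t) ^ ((k : ℝ) / 2) * pt x)) := by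
  have h2πt : 0 < 2 * π * t := by positivity
  set c : ℝ := (2 * π * t) ^ (-(k : ℝ) / 2)
  have hpt_eq (z) : pt z = c * gaussianSmoothing ν t z := by
    rw [hpt, gaussianSmoothing, ← integral_const_mul]; rfl
  have h_log : (fun z => log (pt z)) = fun z => log c + log (gaussianSmoothing ν t z) := by
    funext z
    rw [hpt_eq, log_mul (rpow_pos_of_pos h2πt _).ne' (gaussianSmoothing_pos ht.le z).ne']
  have h_level : (2 * π * t) ^ ((k : ℝ) / 2) * pt x = gaussianSmoothing ν t x := by
    rw [hpt_eq, ← mul_assoc, ← rpow_add h2πt, neg_div, add_neg_cancel, rpow_zero, one_mul]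
  rw [h_log, gradient, fderiv_const_add, ← gradient, h_level]
  exact sq_norm_gradient_log_gaussianSmoothing_le ht x
end
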